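/- arXiv:math/0612782 — 2 statements merged into one kernel-verified Lean document; each statement's English description precedes it below -/
import Mathlib

section
/- Let n, d ≥ 1 be integers with nd ≥ 2. For a tuple of integers (h_1,…,h_{nd−1}) with nd ≤ h_j ≤ nd + j − 1 for each j, let Λ(h) denote the multiset consisting of the one-point interval [nd, nd] together with the intervals [nd − j, h_j] and [h_j + 1, nd + j] for j = 1,…,nd−1. Then the map h ↦ Λ(h) is injective on the set of all such tuples, and consequently the number of admissible proper systems with parameters m = 2nd and σ(i) = min(i, 2nd − i), consisting of exactly 2nd − 1 intervals, is at least (nd − 1)!. -/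
/-- `IsProperSystem m σ S` : `S` is a *proper system* with parameters `(m, σ)`, i.e. a finite
multiset of closed intervals `[a,b]` with integer endpoints (encoded as pairs `(a,b)` of
integers, one-point intervals `a = b` allowed) contained in `[0,m]`, such that for every
integer `i ∈ [0,m]` the number of intervals of `S` containing `i`, counted with multiplicity,
equals `σ i`. -/
def IsProperSystem (m : ℤ) (σ : ℤ → ℕ) (S : Multiset (ℤ × ℤ)) : Prop :=
  (∀ I ∈ S, 0 ≤ I.1 ∧ I.1 ≤ I.2 ∧ I.2 ≤ m) ∧
  ∀ i : ℤ, 0 ≤ i → i ≤ m →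
    (S.filter fun I => I.1 ≤ i ∧ i ≤ I.2).card = σ i

/-- The *graph* of a system of intervals in `[0,m]` enumerated (with multiplicity) by
`f : Fin t → ℤ × ℤ` : its vertices are the `t` intervals (`Sum.inl j` is the `j`-th interval)
together with `m` additional vertices `w_0, …, w_{m-1}` (`Sum.inr i` is `w_i`), and `w_i` is
adjacent exactly to the intervals whose right endpoint is `i` and to the intervals whose
left endpoint is `i + 1`. -/
def systemGraph (m : ℕ) {t : ℕ} (f : Fin t → ℤ × ℤ) : SimpleGraph (Fin t ⊕ Fin m) :=
  SimpleGraph.fromRel fun u v =>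
    match u, v with
    | Sum.inl j, Sum.inr i => (f j).2 = (i : ℤ) ∨ (f j).1 = (i : ℤ) + 1
    | _, _ => False

/-- A multiset of intervals in `[0,m]` is *admissible* if its graph is a tree.  (The graph is
independent, up to isomorphism, of the chosen enumeration of the multiset.) -/
def IsAdmissible (m : ℕ) (S : Multiset (ℤ × ℤ)) : Prop :=
  ∃ (t : ℕ) (f : Fin t → ℤ × ℤ), (List.ofFn f : Multiset (ℤ × ℤ)) = S ∧
    (systemGraph m f).IsTree

/-- `IsMarkedSystem m σ t M` : `M` is a *marked admissible proper system* with parameters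
`(m, σ)` consisting of exactly `t` intervals: a finite multiset of pairs `(I, p)` where `p`
is an integer point of the interval `I`, whose multiset of first components is an admissible
proper system with parameters `(m, σ)` consisting of `t` intervals. -/
def IsMarkedSystem (m : ℕ) (σ : ℤ → ℕ) (t : ℕ) (M : Multiset ((ℤ × ℤ) × ℤ)) : Prop :=
  (∀ p ∈ M, p.1.1 ≤ p.2 ∧ p.2 ≤ p.1.2) ∧
  IsProperSystem m σ (M.map Prod.fst) ∧
  IsAdmissible m (M.map Prod.fst) ∧
  M.card = t

/-- The multiset `Λ(h)` consisting of the one-point interval `[N, N]` together with, for each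
`j ∈ {1, …, N-1}`, the two intervals `[N - j, h j]` and `[h j + 1, N + j]`. -/
def squareSystem (N : ℕ) (h : ℕ → ℤ) : Multiset (ℤ × ℤ) :=
  ((N : ℤ), (N : ℤ)) ::ₘ
    (Finset.Icc 1 (N - 1)).val.bind fun j =>
      {((N : ℤ) - j, h j), (h j + 1, (N : ℤ) + j)}

/-! The intervals of `Λ(h)` all lie in `[1, 2N - 1]`, so each is adjacent to exactly two of the
gap vertices `w_0, …, w_{2N-1}`: the graph has `2 (2N - 1)` edges on `4N - 1` vertices, hence it
is a tree as soon as it is connected, and connectivity spreads outwards from `w_N`. For the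
coverage count, the two halves `[N - j, h_j]` and `[h_j + 1, N + j]` partition `[N - j, N + j]`,
so exactly one of them contains `i` when `|i - N| ≤ j` and none otherwise. Finally
`[N - j, h_j]` is the only interval of `Λ(h)` with left endpoint `N - j`, so `Λ` is injective on
the `(N - 1)!` tuples. -/

open SimpleGraph Finset
open scoped Nat

section systemGraph

variable {m t : ℕ} (f : Fin t → ℤ × ℤ)

lemma systemGraph_adj_inl_inr {k : Fin t} {i : Fin m} :
    (systemGraph m f).Adj (.inl k) (.inr i) ↔ (f k).2 = i ∨ (f k).1 = i + 1 := by
  simp [systemGraph]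

lemma systemGraph_isBipartiteWith :
    (systemGraph m f).IsBipartiteWith (univ.map .inl : Finset (Fin t ⊕ Fin m))
      (univ.map .inr : Finset (Fin t ⊕ Fin m)) where
  disjoint := by simpa using Set.isCompl_range_inl_range_inr.disjoint
  mem_of_adj := by rintro (k | i) (k' | i') h <;> simp_all [systemGraph]

lemma systemGraph_degree_inl {k : Fin t} [Fintype ((systemGraph m f).neighborSet (.inl k))]
    (hk : 1 ≤ (f k).1 ∧ (f k).1 ≤ (f k).2 ∧ (f k).2 < m) :
    (systemGraph m f).degree (.inl k) = 2 := by
  obtain ⟨ha, hab, hb⟩ := hk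
  have : (systemGraph m f).neighborFinset (.inl k) =
      {.inr ⟨(f k).2.toNat, by omega⟩, .inr ⟨((f k).1 - 1).toNat, by omega⟩} := by
    ext (k' | i)
    · rw [mem_neighborFinset]; simp [systemGraph]
    · simp only [mem_neighborFinset, systemGraph_adj_inl_inr, Finset.mem_insert,
        Finset.mem_singleton, Sum.inr.injEq, Fin.ext_iff]
      omega
  rw [← card_neighborFinset_eq_degree, this,
    card_pair (by simp only [ne_eq, Sum.inr.injEq, Fin.ext_iff]; omega)]

lemma card_edgeSet_systemGraph (hf : ∀ k, 1 ≤ (f k).1 ∧ (f k).1 ≤ (f k).2 ∧ (f k).2 < m) :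
    Nat.card (systemGraph m f).edgeSet = 2 * t := by
  classical
  rw [Nat.card_eq_fintype_card, ← edgeFinset_card,
    ← isBipartiteWith_sum_degrees_eq_card_edges (systemGraph_isBipartiteWith f), sum_map]
  calc ∑ k, (systemGraph m f).degree (.inl k) = ∑ _k : Fin t, 2 :=
        sum_congr rfl fun k _ => systemGraph_degree_inl f (hf k)
    _ = 2 * t := by simp [mul_comm]

lemma isTree_systemGraph (hf : ∀ k, 1 ≤ (f k).1 ∧ (f k).1 ≤ (f k).2 ∧ (f k).2 < m)
    (hm : t + 1 = m) (hconn : (systemGraph m f).Connected) : (systemGraph m f).IsTree := by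
  rw [isTree_iff_connected_and_card, card_edgeSet_systemGraph f hf, Nat.card_sum]
  simp only [Nat.card_eq_fintype_card, Fintype.card_fin]
  exact ⟨hconn, by omega⟩

lemma systemGraph_reachable_of_mem {S : Multiset (ℤ × ℤ)}
    (hf : (List.ofFn f : Multiset (ℤ × ℤ)) = S) {i i' : Fin m}
    (hI : ((i : ℤ) + 1, (i' : ℤ)) ∈ S) :
    (systemGraph m f).Reachable (.inr i) (.inr i') := by
  obtain ⟨k, hk⟩ : ∃ k, f k = ((i : ℤ) + 1, (i' : ℤ)) := by
    rwa [← hf, Multiset.mem_coe, List.mem_ofFn'] at hI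
  have hleft : (systemGraph m f).Adj (.inl k) (.inr i) := by simp [systemGraph_adj_inl_inr, hk]
  have hright : (systemGraph m f).Adj (.inl k) (.inr i') := by simp [systemGraph_adj_inl_inr, hk]
  exact hleft.symm.reachable.trans hright.reachable

end systemGraph

def IsSplitSequence (N : ℕ) (h : ℕ → ℤ) : Prop :=
  ∀ j : ℕ, 1 ≤ j → j ≤ N - 1 → (N : ℤ) ≤ h j ∧ h j ≤ N + j - 1

section squareSystem

variable {N : ℕ} {h : ℕ → ℤ}

lemma mem_squareSystem {I : ℤ × ℤ} :
    I ∈ squareSystem N h ↔ I = ((N : ℤ), (N : ℤ)) ∨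
      ∃ j, 1 ≤ j ∧ j ≤ N - 1 ∧
        (I = ((N : ℤ) - j, h j) ∨ I = (h j + 1, (N : ℤ) + j)) := by
  simp [squareSystem, and_assoc, and_or_left, exists_or, eq_comm]

lemma card_squareSystem (hN : 1 ≤ N) : (squareSystem N h).card = 2 * N - 1 := by
  simp only [squareSystem, Multiset.card_cons, Multiset.card_bind]
  change ∑ j ∈ Icc 1 (N - 1), 2 + 1 = _
  simp only [sum_const, Nat.card_Icc, smul_eq_mul]
  omega

lemma IsSplitSequence.bounds_of_mem_squareSystem (hh : IsSplitSequence N h) (hN : 1 ≤ N)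
    {I : ℤ × ℤ} (hI : I ∈ squareSystem N h) : 1 ≤ I.1 ∧ I.1 ≤ I.2 ∧ I.2 < 2 * N := by
  rcases mem_squareSystem.1 hI with rfl | ⟨j, hj1, hjN, rfl | rfl⟩
  · omega
  all_goals have := hh j hj1 hjN; omega

lemma IsSplitSequence.eq_of_mem_squareSystem (hh : IsSplitSequence N h) {j : ℕ} {x : ℤ}
    (hj : 1 ≤ j) (hmem : ((N : ℤ) - j, x) ∈ squareSystem N h) : x = h j := by
  rcases mem_squareSystem.1 hmem with he | ⟨j', hj1, hjN, he | he⟩ <;>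
    simp only [Prod.ext_iff] at he
  · omega
  · obtain rfl : j = j' := by omega
    exact he.2
  · have := hh j' hj1 hjN
    omega

lemma IsSplitSequence.eq_of_squareSystem_eq {h' : ℕ → ℤ} (hh' : IsSplitSequence N h')
    (heq : squareSystem N h = squareSystem N h') {j : ℕ} (hj1 : 1 ≤ j) (hjN : j ≤ N - 1) :
    h j = h' j :=
  hh'.eq_of_mem_squareSystem hj1 <| heq ▸ mem_squareSystem.2 <| .inr ⟨j, hj1, hjN, .inl rfl⟩

lemma card_filter_pair {a c b i : ℤ} (hac : a ≤ c + 1) (hcb : c ≤ b) :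
    (({(a, c), (c + 1, b)} : Multiset (ℤ × ℤ)).filter fun I => I.1 ≤ i ∧ i ≤ I.2).card =
      if a ≤ i ∧ i ≤ b then 1 else 0 := by
  rw [← Multiset.countP_eq_card_filter]
  change Multiset.countP _ ((a, c) ::ₘ (c + 1, b) ::ₘ 0) = _
  rw [Multiset.countP_cons, Multiset.countP_cons, Multiset.countP_zero]
  split_ifs <;> omega

lemma IsSplitSequence.card_filter_squareSystem (hh : IsSplitSequence N h) (hN : 1 ≤ N) (i : ℤ) :
    ((squareSystem N h).filter fun I => I.1 ≤ i ∧ i ≤ I.2).card =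
      (min i (2 * N - i)).toNat := by
  have hpair : ∀ j ∈ Icc 1 (N - 1),
      (({((N : ℤ) - j, h j), (h j + 1, (N : ℤ) + j)} : Multiset (ℤ × ℤ)).filter
        fun I => I.1 ≤ i ∧ i ≤ I.2).card = if (i - N).natAbs ≤ j then 1 else 0 := by
    intro j hj
    have := hh j (mem_Icc.1 hj).1 (mem_Icc.1 hj).2
    rw [card_filter_pair (by omega) (by omega)]
    exact if_congr (by omega) rfl rfl
  have hfilter : (Icc 1 (N - 1)).filter (fun j => (i - N).natAbs ≤ j) =
      Icc (max 1 (i - N).natAbs) (N - 1) := by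
    ext j
    simp only [mem_filter, mem_Icc, max_le_iff]
    omega
  rw [← Multiset.countP_eq_card_filter, squareSystem, Multiset.countP_cons,
    Multiset.countP_eq_card_filter, Multiset.filter_bind, Multiset.card_bind]
  change ∑ j ∈ Icc 1 (N - 1), _ + _ = _
  simp only [Function.comp_apply]
  rw [sum_congr rfl hpair, sum_boole, Nat.cast_id, hfilter, Nat.card_Icc]
  split_ifs <;> omega

lemma IsSplitSequence.isProperSystem_squareSystem (hh : IsSplitSequence N h) (hN : 1 ≤ N) :
    IsProperSystem (2 * N) (fun i => (min i (2 * N - i)).toNat) (squareSystem N h) := by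
  refine ⟨fun I hI => ?_, fun i _ _ => hh.card_filter_squareSystem hN i⟩
  have := hh.bounds_of_mem_squareSystem hN hI
  omega

lemma IsSplitSequence.connected_systemGraph (hh : IsSplitSequence N h) (hN : 1 ≤ N) {t : ℕ}
    {f : Fin t → ℤ × ℤ} (hf : (List.ofFn f : Multiset (ℤ × ℤ)) = squareSystem N h) :
    (systemGraph (2 * N) f).Connected := by
  set G := systemGraph (2 * N) f
  let w (x : ℕ) (hx : x < 2 * N) : Fin t ⊕ Fin (2 * N) := .inr ⟨x, hx⟩
  have link : ∀ x x' (hx : x < 2 * N) (hx' : x' < 2 * N),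
      ((x : ℤ) + 1, (x' : ℤ)) ∈ squareSystem N h → G.Reachable (w x hx) (w x' hx') :=
    fun x x' hx hx' => systemGraph_reachable_of_mem f (i := ⟨x, hx⟩) (i' := ⟨x', hx'⟩) hf
  have hroot : N < 2 * N := by omega
  -- `w_x` is reached for `x` in a window that grows by one on each side per step: the split
  -- point `h (j + 1)` lies in the current window, and the two halves of `[N - j - 1, N + j + 1]`
  -- link it to the two new endpoints.
  have hwindow : ∀ j ≤ N - 1, ∀ x (hx : x < 2 * N), N - 1 - j ≤ x → x ≤ N + j →
      G.Reachable (w N hroot) (w x hx) := by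
    intro j
    induction j with
    | zero =>
      intro _ x hx hlo hhi
      obtain rfl | rfl : x = N - 1 ∨ x = N := by omega
      · exact (link _ _ _ _ (mem_squareSystem.2 (.inl (by ext <;> push_cast <;> omega)))).symm
      · rfl
    | succ j ih =>
      intro hj x hx hlo hhi
      obtain ⟨hp, hp'⟩ := hh (j + 1) (by omega) (by omega)
      have hmid := ih (by omega) (h (j + 1)).toNat (by omega) (by omega) (by omega)
      by_cases hinner : N - 1 - j ≤ x ∧ x ≤ N + j
      · exact ih (by omega) x hx hinner.1 hinner.2
      obtain rfl | rfl : x = N - j - 2 ∨ x = N + (j + 1) := by omega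
      · refine hmid.trans (link _ _ _ _ <| mem_squareSystem.2 <|
          .inr ⟨j + 1, by omega, by omega, .inl ?_⟩).symm
        ext <;> push_cast <;> omega
      · refine hmid.trans (link _ _ _ _ <| mem_squareSystem.2 <|
          .inr ⟨j + 1, by omega, by omega, .inr ?_⟩)
        ext <;> push_cast <;> omega
  rw [connected_iff_exists_forall_reachable]
  refine ⟨w N hroot, ?_⟩
  rintro (k | ⟨x, hx⟩)
  · have hk : f k ∈ squareSystem N h := by rw [← hf]; simp
    obtain ⟨h1, h12, h2⟩ := hh.bounds_of_mem_squareSystem hN hk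
    have hadj : G.Adj (.inl k) (w (f k).2.toNat (by omega)) := by
      simp only [G, w, systemGraph_adj_inl_inr]; omega
    exact (hwindow (N - 1) le_rfl _ _ (by omega) (by omega)).trans hadj.symm.reachable
  · exact hwindow (N - 1) le_rfl x hx (by omega) (by omega)

lemma IsSplitSequence.isAdmissible_squareSystem (hh : IsSplitSequence N h) (hN : 1 ≤ N) :
    IsAdmissible (2 * N) (squareSystem N h) := by
  obtain ⟨l, hl⟩ := Quot.exists_rep (squareSystem N h)
  have hf : (List.ofFn l.get : Multiset (ℤ × ℤ)) = squareSystem N h := by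
    rw [List.ofFn_get]; exact hl
  refine ⟨l.length, l.get, hf,
    isTree_systemGraph _ (fun k => ?_) ?_ (hh.connected_systemGraph hN hf)⟩
  · exact hh.bounds_of_mem_squareSystem hN (by rw [← hf]; simp)
  · have := card_squareSystem (h := h) hN
    rw [← hf, Multiset.coe_card, List.length_ofFn] at this
    omega

end squareSystem

lemma finite_setOf_multiset_card_eq {α : Type*} (A : Finset α) (t : ℕ) :
    {S : Multiset α | (∀ a ∈ S, a ∈ A) ∧ S.card = t}.Finite := by
  classical
  refine ((A.sym t).image Sym.toMultiset).finite_toSet.subset ?_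
  rintro S ⟨hA, hS⟩
  simpa using ⟨⟨S, hS⟩, hA, rfl⟩

noncomputable def splitTuples (N : ℕ) : Finset (Fin (N - 1) → ℤ) :=
  Fintype.piFinset fun j => Icc (N : ℤ) (N + (j : ℕ))

lemma card_splitTuples (N : ℕ) : #(splitTuples N) = (N - 1)! := by
  rw [splitTuples, Fintype.card_piFinset, ← prod_range_add_one_eq_factorial,
    ← Fin.prod_univ_eq_prod_range]
  refine prod_congr rfl fun j _ => ?_
  rw [Int.card_Icc]
  omega

-- Entry `j` of the tuple is `h (j + 1)`; the values at `0` and beyond `N - 1` play no role.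
def splitSequenceOfFin {N : ℕ} (g : Fin (N - 1) → ℤ) (j : ℕ) : ℤ :=
  if hj : j - 1 < N - 1 then g ⟨j - 1, hj⟩ else 0

lemma splitSequenceOfFin_succ {N : ℕ} (g : Fin (N - 1) → ℤ) (j : Fin (N - 1)) :
    splitSequenceOfFin g (j + 1) = g j := by
  simp [splitSequenceOfFin]

lemma isSplitSequence_splitSequenceOfFin {N : ℕ} {g : Fin (N - 1) → ℤ}
    (hg : g ∈ splitTuples N) :
    IsSplitSequence N (splitSequenceOfFin g) := by
  intro j hj1 hjN
  obtain ⟨j, rfl⟩ : ∃ j' : Fin (N - 1), j = j' + 1 :=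
    ⟨⟨j - 1, by omega⟩, by simp only; omega⟩
  have := mem_Icc.1 (Fintype.mem_piFinset.1 hg j)
  rw [splitSequenceOfFin_succ]
  push_cast
  omega

theorem factorial_pred_le_ncard_admissible {N : ℕ} (hN : 1 ≤ N) :
    (N - 1)! ≤ {S | IsProperSystem (2 * N) (fun i => (min i (2 * N - i)).toNat) S ∧
        IsAdmissible (2 * N) S ∧ S.card = 2 * N - 1}.ncard := by
  rw [← card_splitTuples, ← Set.ncard_coe_finset]
  refine Set.ncard_le_ncard_of_injOn (fun g => squareSystem N (splitSequenceOfFin g)) ?_ ?_ ?_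
  · intro g hg
    have hh := isSplitSequence_splitSequenceOfFin hg
    exact ⟨hh.isProperSystem_squareSystem hN, hh.isAdmissible_squareSystem hN,
      card_squareSystem hN⟩
  · intro g hg g' hg' heq
    funext j
    simpa only [splitSequenceOfFin_succ] using
      (isSplitSequence_splitSequenceOfFin hg').eq_of_squareSystem_eq heq (j := j + 1) (by omega)
        (by omega)
  · refine (finite_setOf_multiset_card_eq
      (Icc ((0 : ℤ), (0 : ℤ)) ((2 * N : ℤ), (2 * N : ℤ))) (2 * N - 1)).subset ?_
    rintro S ⟨⟨hS, -⟩, -, hcard⟩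
    refine ⟨fun I hI => ?_, hcard⟩
    have := hS I hI
    simp only [mem_Icc, Prod.le_def]
    omega

theorem statement6_general (n d : ℕ) (hnd : 2 ≤ n * d) :
    (∀ h h' : ℕ → ℤ,
      (∀ j : ℕ, 1 ≤ j → j ≤ n * d - 1 →
        (n * d : ℤ) ≤ h j ∧ h j ≤ (n * d : ℤ) + j - 1) →
      (∀ j : ℕ, 1 ≤ j → j ≤ n * d - 1 →
        (n * d : ℤ) ≤ h' j ∧ h' j ≤ (n * d : ℤ) + j - 1) →
      squareSystem (n * d) h = squareSystem (n * d) h' →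
      ∀ j : ℕ, 1 ≤ j → j ≤ n * d - 1 → h j = h' j) ∧
    Nat.factorial (n * d - 1) ≤
      Set.ncard {S : Multiset (ℤ × ℤ) |
        IsProperSystem (2 * (n * d)) (fun i : ℤ => (min i (2 * ((n : ℤ) * d) - i)).toNat) S ∧
        IsAdmissible (2 * (n * d)) S ∧
        S.card = 2 * (n * d) - 1} := by
  refine ⟨fun h h' _ hh' heq j hj1 hjN => ?_, ?_⟩
  · have hh' : IsSplitSequence (n * d) h' := by
      simpa only [IsSplitSequence, Nat.cast_mul] using hh'
    exact hh'.eq_of_squareSystem_eq heq hj1 hjN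
  · simpa only [Nat.cast_mul] using factorial_pred_le_ncard_admissible (N := n * d) (by omega)

/-- Let `n, d ≥ 1` with `nd ≥ 2`.  The map `h ↦ Λ(h)` is injective on the
set of tuples `(h_1, …, h_{nd-1})` of integers with `nd ≤ h_j ≤ nd + j - 1` for each `j`, and
consequently the number of admissible proper systems with parameters `m = 2nd` and
`σ(i) = min(i, 2nd - i)`, consisting of exactly `2nd - 1` intervals, is at least `(nd - 1)!`. -/
theorem statement6 (n d : ℕ) (hn : 1 ≤ n) (hd : 1 ≤ d) (hnd : 2 ≤ n * d) :
    (∀ h h' : ℕ → ℤ,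
      (∀ j : ℕ, 1 ≤ j → j ≤ n * d - 1 →
        (n * d : ℤ) ≤ h j ∧ h j ≤ (n * d : ℤ) + j - 1) →
      (∀ j : ℕ, 1 ≤ j → j ≤ n * d - 1 →
        (n * d : ℤ) ≤ h' j ∧ h' j ≤ (n * d : ℤ) + j - 1) →
      squareSystem (n * d) h = squareSystem (n * d) h' →
      ∀ j : ℕ, 1 ≤ j → j ≤ n * d - 1 → h j = h' j) ∧
    Nat.factorial (n * d - 1) ≤
      Set.ncard {S : Multiset (ℤ × ℤ) |
        IsProperSystem (2 * (n * d)) (fun i : ℤ => (min i (2 * ((n : ℤ) * d) - i)).toNat) S ∧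
        IsAdmissible (2 * (n * d)) S ∧
        S.card = 2 * (n * d) - 1} :=
  statement6_general n d hnd
end

section
/- Let n ≥ 1 and d, d₁, d₂ be integers with 1 ≤ d₂ ≤ d₁ < d; set a = n(d − d₁) and m = n(2d − d₁ − d₂). Choose integers h_j with a − j ≤ h_j ≤ a + j − 1 for j ∈ {1,…,a−1}, integers g_j with 0 ≤ g_j ≤ a + j − 1 for j ∈ {a,…,n(d−d₂)−1}, and integers p_j with 0 ≤ p_j ≤ m − 1 for j ∈ {n(d−d₂),…,nd−1}. Then the multiset consisting of the one-point interval [a, a], the intervals [a − j, h_j] and [h_j + 1, a + j] for j = 1,…,a−1, the intervals [0, g_j] and [g_j + 1, a + j] for j = a,…,n(d−d₂)−1, and the intervals [0, p_j] and [p_j + 1, m] for j = n(d−d₂),…,nd−1, is a proper system with parameters m = n(2d − d₁ − d₂) and σ(i) = min(n d₁ + i, m + n d₂ − i), consisting of exactly 2nd − 1 intervals. -/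
def splitPairs (s : Finset ℕ) (x y z : ℕ → ℤ) : Multiset (ℤ × ℤ) :=
  s.val.bind fun j => {(x j, y j), (y j + 1, z j)}

section SplitPairs

variable (s : Finset ℕ) (x y z : ℕ → ℤ)

theorem card_splitPairs : (splitPairs s x y z).card = 2 * s.card := by
  simp [splitPairs, two_mul]

theorem bounds_of_mem_splitPairs {m : ℤ}
    (hs : ∀ j ∈ s, 0 ≤ x j ∧ x j ≤ y j ∧ y j < z j ∧ z j ≤ m) :
    ∀ I ∈ splitPairs s x y z, 0 ≤ I.1 ∧ I.1 ≤ I.2 ∧ I.2 ≤ m := by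
  simp only [splitPairs, Multiset.mem_bind, Finset.mem_val, Multiset.insert_eq_cons,
    Multiset.mem_cons, Multiset.mem_singleton]
  rintro I ⟨j, hj, rfl | rfl⟩ <;> have := hs j hj <;> dsimp only <;> omega

theorem card_filter_mem_pair {x y z i : ℤ} (hxy : x ≤ y + 1) (hyz : y ≤ z) :
    (({(x, y), (y + 1, z)} : Multiset (ℤ × ℤ)).filter fun I => I.1 ≤ i ∧ i ≤ I.2).card
      = if x ≤ i ∧ i ≤ z then 1 else 0 := by
  rw [← Multiset.countP_eq_card_filter, Multiset.insert_eq_cons, ← Multiset.cons_zero,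
    Multiset.countP_cons, Multiset.countP_cons, Multiset.countP_zero]
  split_ifs <;> omega

theorem card_filter_mem_splitPairs (hs : ∀ j ∈ s, x j ≤ y j + 1 ∧ y j ≤ z j) (i : ℤ) :
    ((splitPairs s x y z).filter fun I => I.1 ≤ i ∧ i ≤ I.2).card
      = (s.filter fun j => x j ≤ i ∧ i ≤ z j).card := by
  rw [splitPairs, Multiset.filter_bind, Multiset.card_bind, Finset.card_filter,
    Finset.sum_eq_multiset_sum]
  refine congrArg Multiset.sum (Multiset.map_congr rfl fun j hj => ?_)
  exact card_filter_mem_pair (hs j hj).1 (hs j hj).2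

end SplitPairs

theorem card_filter_Icc_of_iff_le {lo hi k : ℕ} {P : ℕ → Prop} [DecidablePred P]
    (hP : ∀ j, P j ↔ k ≤ j) : ((Finset.Icc lo hi).filter P).card = hi + 1 - max lo k := by
  rw [show (Finset.Icc lo hi).filter P = Finset.Icc (max lo k) hi by
    ext; simp only [Finset.mem_filter, Finset.mem_Icc, hP]; omega, Nat.card_Icc]

-- The system of the theorem for `a = n(d - d₁)`, `b = n(d - d₂)`, `c = nd`, so that `m = a + b`.
def splitSystem (a b c : ℕ) (h g p : ℕ → ℤ) : Multiset (ℤ × ℤ) :=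
  ((a : ℤ), (a : ℤ)) ::ₘ
    (splitPairs (Finset.Icc 1 (a - 1)) (fun j => a - j) h (fun j => a + j) +
      splitPairs (Finset.Icc a (b - 1)) (fun _ => 0) g (fun j => a + j) +
      splitPairs (Finset.Icc b (c - 1)) (fun _ => 0) p fun _ => a + b)

section SplitSystem

variable {a b c : ℕ} {h g p : ℕ → ℤ}

theorem card_splitSystem (ha : 1 ≤ a) (hab : a ≤ b) (hbc : b ≤ c) :
    (splitSystem a b c h g p).card = 2 * c - 1 := by
  simp only [splitSystem, Multiset.card_cons, Multiset.card_add, card_splitPairs, Nat.card_Icc]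
  omega

theorem bounds_of_mem_splitSystem (hab : a ≤ b)
    (hh : ∀ j : ℕ, 1 ≤ j → j ≤ a - 1 → (a : ℤ) - j ≤ h j ∧ h j ≤ (a : ℤ) + j - 1)
    (hg : ∀ j : ℕ, a ≤ j → j ≤ b - 1 → 0 ≤ g j ∧ g j ≤ (a : ℤ) + j - 1)
    (hp : ∀ j : ℕ, b ≤ j → j ≤ c - 1 → 0 ≤ p j ∧ p j ≤ (a + b : ℤ) - 1) :
    ∀ I ∈ splitSystem a b c h g p, 0 ≤ I.1 ∧ I.1 ≤ I.2 ∧ I.2 ≤ (a + b : ℤ) := by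
  simp only [splitSystem, Multiset.forall_mem_cons, Multiset.mem_add]
  refine ⟨by omega, fun I hI => ?_⟩
  rcases hI with (hI | hI) | hI <;>
    refine bounds_of_mem_splitPairs _ _ _ _ (fun j hj => ?_) I hI <;> rw [Finset.mem_Icc] at hj
  · have := hh j hj.1 hj.2
    omega
  · have := hg j hj.1 hj.2
    omega
  · have := hp j hj.1 hj.2
    omega

theorem card_filter_mem_splitSystem (ha : 1 ≤ a) (hab : a ≤ b) (hbc : b ≤ c)
    (hh : ∀ j : ℕ, 1 ≤ j → j ≤ a - 1 → (a : ℤ) - j ≤ h j ∧ h j ≤ (a : ℤ) + j - 1)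
    (hg : ∀ j : ℕ, a ≤ j → j ≤ b - 1 → 0 ≤ g j ∧ g j ≤ (a : ℤ) + j - 1)
    (hp : ∀ j : ℕ, b ≤ j → j ≤ c - 1 → 0 ≤ p j ∧ p j ≤ (a + b : ℤ) - 1)
    {i : ℤ} (hi0 : 0 ≤ i) (him : i ≤ a + b) :
    ((splitSystem a b c h g p).filter fun I => I.1 ≤ i ∧ i ≤ I.2).card
      = (min ((c : ℤ) - a + i) ((a + b : ℤ) + (c - b) - i)).toNat := by
  have hH : ∀ j ∈ Finset.Icc 1 (a - 1), (a : ℤ) - j ≤ h j + 1 ∧ h j ≤ a + j := fun j hj => by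
    have := hh j (Finset.mem_Icc.1 hj).1 (Finset.mem_Icc.1 hj).2
    omega
  have hG : ∀ j ∈ Finset.Icc a (b - 1), (0 : ℤ) ≤ g j + 1 ∧ g j ≤ a + j := fun j hj => by
    have := hg j (Finset.mem_Icc.1 hj).1 (Finset.mem_Icc.1 hj).2
    omega
  have hP : ∀ j ∈ Finset.Icc b (c - 1), (0 : ℤ) ≤ p j + 1 ∧ p j ≤ a + b := fun j hj => by
    have := hp j (Finset.mem_Icc.1 hj).1 (Finset.mem_Icc.1 hj).2
    omega
  rw [splitSystem, ← Multiset.countP_eq_card_filter, Multiset.countP_cons,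
    Multiset.countP_eq_card_filter, Multiset.filter_add, Multiset.filter_add,
    Multiset.card_add, Multiset.card_add,
    card_filter_mem_splitPairs _ _ _ _ hH, card_filter_mem_splitPairs _ _ _ _ hG,
    card_filter_mem_splitPairs _ _ _ _ hP,
    card_filter_Icc_of_iff_le (k := (i - a).natAbs) fun j => by omega,
    card_filter_Icc_of_iff_le (k := (i - a).toNat) fun j => by omega,
    card_filter_Icc_of_iff_le (k := 0) fun j => by omega]
  split_ifs <;> omega

theorem isProperSystem_splitSystem (ha : 1 ≤ a) (hab : a ≤ b) (hbc : b ≤ c)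
    (hh : ∀ j : ℕ, 1 ≤ j → j ≤ a - 1 → (a : ℤ) - j ≤ h j ∧ h j ≤ (a : ℤ) + j - 1)
    (hg : ∀ j : ℕ, a ≤ j → j ≤ b - 1 → 0 ≤ g j ∧ g j ≤ (a : ℤ) + j - 1)
    (hp : ∀ j : ℕ, b ≤ j → j ≤ c - 1 → 0 ≤ p j ∧ p j ≤ (a + b : ℤ) - 1) :
    IsProperSystem (a + b) (fun i => (min ((c : ℤ) - a + i) ((a + b : ℤ) + (c - b) - i)).toNat)
      (splitSystem a b c h g p) :=
  ⟨bounds_of_mem_splitSystem hab hh hg hp,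
    fun _ hi0 him => card_filter_mem_splitSystem ha hab hbc hh hg hp hi0 him⟩

end SplitSystem

theorem statement9_general (n d d₁ d₂ : ℕ) (hn : 1 ≤ n) (hd₁ : d₂ ≤ d₁)
    (hd : d₁ < d) (h g p : ℕ → ℤ)
    (hh : ∀ j : ℕ, 1 ≤ j → j ≤ n * (d - d₁) - 1 →
      (n * (d - d₁) : ℤ) - j ≤ h j ∧ h j ≤ (n * (d - d₁) : ℤ) + j - 1)
    (hg : ∀ j : ℕ, n * (d - d₁) ≤ j → j ≤ n * (d - d₂) - 1 →
      0 ≤ g j ∧ g j ≤ (n * (d - d₁) : ℤ) + j - 1)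
    (hp : ∀ j : ℕ, n * (d - d₂) ≤ j → j ≤ n * d - 1 →
      0 ≤ p j ∧ p j ≤ (n * (2 * d - d₁ - d₂) : ℤ) - 1) :
    IsProperSystem (n * (2 * d - d₁ - d₂))
        (fun i : ℤ =>
          (min ((n : ℤ) * d₁ + i)
            ((n * (2 * d - d₁ - d₂) : ℕ) + (n : ℤ) * d₂ - i)).toNat)
        (((n * (d - d₁) : ℤ), (n * (d - d₁) : ℤ)) ::ₘ
          ((((Finset.Icc 1 (n * (d - d₁) - 1)).val.bind fun j =>
              {((n * (d - d₁) : ℤ) - j, h j), (h j + 1, (n * (d - d₁) : ℤ) + j)}) +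
            ((Finset.Icc (n * (d - d₁)) (n * (d - d₂) - 1)).val.bind fun j =>
              {((0 : ℤ), g j), (g j + 1, (n * (d - d₁) : ℤ) + j)})) +
            ((Finset.Icc (n * (d - d₂)) (n * d - 1)).val.bind fun j =>
              {((0 : ℤ), p j), (p j + 1, (n * (2 * d - d₁ - d₂) : ℤ))}))) ∧
      (((n * (d - d₁) : ℤ), (n * (d - d₁) : ℤ)) ::ₘ
          ((((Finset.Icc 1 (n * (d - d₁) - 1)).val.bind fun j =>
              {((n * (d - d₁) : ℤ) - j, h j), (h j + 1, (n * (d - d₁) : ℤ) + j)}) +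
            ((Finset.Icc (n * (d - d₁)) (n * (d - d₂) - 1)).val.bind fun j =>
              {((0 : ℤ), g j), (g j + 1, (n * (d - d₁) : ℤ) + j)})) +
            ((Finset.Icc (n * (d - d₂)) (n * d - 1)).val.bind fun j =>
              {((0 : ℤ), p j), (p j + 1, (n * (2 * d - d₁ - d₂) : ℤ))}))).card =
        2 * (n * d) - 1 := by
  have ha : (n : ℤ) * (d - d₁) = (n * (d - d₁) : ℕ) := by push_cast [Nat.cast_sub hd.le]; ring
  have hm : (n : ℤ) * (2 * d - d₁ - d₂) = (n * (d - d₁) : ℕ) + (n * (d - d₂) : ℕ) := by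
    push_cast [Nat.cast_sub hd.le, Nat.cast_sub (hd₁.trans hd.le)]; ring
  have hm' : ((n * (2 * d - d₁ - d₂) : ℕ) : ℤ) = (n * (d - d₁) : ℕ) + (n * (d - d₂) : ℕ) := by
    rw [← hm]; push_cast [Nat.cast_sub (show d₁ ≤ 2 * d by omega),
      Nat.cast_sub (show d₂ ≤ 2 * d - d₁ by omega)]; ring
  have hk₁ : (n : ℤ) * d₁ = (n * d : ℕ) - (n * (d - d₁) : ℕ) := by
    push_cast [Nat.cast_sub hd.le]; ring
  have hk₂ : (n : ℤ) * d₂ = (n * d : ℕ) - (n * (d - d₂) : ℕ) := by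
    push_cast [Nat.cast_sub (hd₁.trans hd.le)]; ring
  have hc₁ : 1 ≤ n * (d - d₁) := Nat.mul_pos hn (by omega)
  have hc₂ : n * (d - d₁) ≤ n * (d - d₂) := Nat.mul_le_mul_left n (by omega)
  have hc₃ : n * (d - d₂) ≤ n * d := Nat.mul_le_mul_left n (by omega)
  simp only [ha, hm, hm', hk₁, hk₂] at hh hg hp ⊢
  exact ⟨isProperSystem_splitSystem hc₁ hc₂ hc₃ hh hg hp, card_splitSystem hc₁ hc₂ hc₃⟩

/-- Let `n ≥ 1` and `1 ≤ d₂ ≤ d₁ < d`; set `a = n(d - d₁)` and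
`m = n(2d - d₁ - d₂)`.  Choose integers `h j` with `a - j ≤ h j ≤ a + j - 1` for
`j ∈ {1, …, a-1}`, integers `g j` with `0 ≤ g j ≤ a + j - 1` for `j ∈ {a, …, n(d-d₂)-1}`,
and integers `p j` with `0 ≤ p j ≤ m - 1` for `j ∈ {n(d-d₂), …, nd-1}`.  Then the multiset
consisting of the one-point interval `[a, a]`, the intervals `[a - j, h j]` and
`[h j + 1, a + j]` for `j = 1, …, a-1`, the intervals `[0, g j]` and `[g j + 1, a + j]` for
`j = a, …, n(d-d₂)-1`, and the intervals `[0, p j]` and `[p j + 1, m]` for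
`j = n(d-d₂), …, nd-1`, is a proper system with parameters `m = n(2d - d₁ - d₂)` and
`σ(i) = min(n d₁ + i, m + n d₂ - i)`, consisting of exactly `2nd - 1` intervals. -/
theorem statement9 (n d d₁ d₂ : ℕ) (hn : 1 ≤ n) (hd₂ : 1 ≤ d₂) (hd₁ : d₂ ≤ d₁)
    (hd : d₁ < d) (h g p : ℕ → ℤ)
    (hh : ∀ j : ℕ, 1 ≤ j → j ≤ n * (d - d₁) - 1 →
      (n * (d - d₁) : ℤ) - j ≤ h j ∧ h j ≤ (n * (d - d₁) : ℤ) + j - 1)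
    (hg : ∀ j : ℕ, n * (d - d₁) ≤ j → j ≤ n * (d - d₂) - 1 →
      0 ≤ g j ∧ g j ≤ (n * (d - d₁) : ℤ) + j - 1)
    (hp : ∀ j : ℕ, n * (d - d₂) ≤ j → j ≤ n * d - 1 →
      0 ≤ p j ∧ p j ≤ (n * (2 * d - d₁ - d₂) : ℤ) - 1) :
    IsProperSystem (n * (2 * d - d₁ - d₂))
        (fun i : ℤ =>
          (min ((n : ℤ) * d₁ + i)
            ((n * (2 * d - d₁ - d₂) : ℕ) + (n : ℤ) * d₂ - i)).toNat)
        (((n * (d - d₁) : ℤ), (n * (d - d₁) : ℤ)) ::ₘ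
          ((((Finset.Icc 1 (n * (d - d₁) - 1)).val.bind fun j =>
              {((n * (d - d₁) : ℤ) - j, h j), (h j + 1, (n * (d - d₁) : ℤ) + j)}) +
            ((Finset.Icc (n * (d - d₁)) (n * (d - d₂) - 1)).val.bind fun j =>
              {((0 : ℤ), g j), (g j + 1, (n * (d - d₁) : ℤ) + j)})) +
            ((Finset.Icc (n * (d - d₂)) (n * d - 1)).val.bind fun j =>
              {((0 : ℤ), p j), (p j + 1, (n * (2 * d - d₁ - d₂) : ℤ))}))) ∧
      (((n * (d - d₁) : ℤ), (n * (d - d₁) : ℤ)) ::ₘ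
          ((((Finset.Icc 1 (n * (d - d₁) - 1)).val.bind fun j =>
              {((n * (d - d₁) : ℤ) - j, h j), (h j + 1, (n * (d - d₁) : ℤ) + j)}) +
            ((Finset.Icc (n * (d - d₁)) (n * (d - d₂) - 1)).val.bind fun j =>
              {((0 : ℤ), g j), (g j + 1, (n * (d - d₁) : ℤ) + j)})) +
            ((Finset.Icc (n * (d - d₂)) (n * d - 1)).val.bind fun j =>
              {((0 : ℤ), p j), (p j + 1, (n * (2 * d - d₁ - d₂) : ℤ))}))).card =
        2 * (n * d) - 1 :=
  statement9_general n d d₁ d₂ hn hd₁ hd h g p hh hg hp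
end
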